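/- Let W(l) = ( l l l ; 0 0 0 ) denote the Wigner 3j symbol with equal degrees and zero magnetic numbers, given for even l by W(l)² = [(3l/2)!]² / [(l/2)!]^6 · [l!]³/(3l+1)!. Then lim_{l→∞, l even} l² W(l)² = 2/(π√3). -/

import Mathlib

open Filter Real

/-- Square of the Wigner 3j symbol `(l l l; 0 0 0)` for even `l = 2k`:
`W(2k)² = [(3k)!]² / [k!]^6 · [(2k)!]³ / (6k+1)!`. -/
noncomputable def wigner3jSqEqual (k : ℕ) : ℝ :=
  ((Nat.factorial (3 * k) : ℝ)) ^ 2 / ((Nat.factorial k : ℝ)) ^ 6 *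
    ((Nat.factorial (2 * k) : ℝ)) ^ 3 / (Nat.factorial (6 * k + 1) : ℝ)

/-!
Since `(2k)! = C(2k,k) (k!)²` and `(6k)! = C(6k,3k) ((3k)!)²`, the factorials collapse to
`W(2k)² = C(2k,k)³ / ((6k+1) C(6k,3k))`. Stirling's formula gives `C(2n,n) ~ 4ⁿ / √(πn)`; the
powers of `4` cancel, leaving `(2k)² W(2k)² ~ 4k² / (6k+1) · √3 / (πk) → 2 / (π√3)`.
-/

open Nat Asymptotics

theorem cast_factorial_two_mul (n : ℕ) :
    ((2 * n)! : ℝ) = centralBinom n * (n ! : ℝ) ^ 2 := by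
  rw [centralBinom_eq_two_mul_choose, two_mul, ← add_choose_mul_factorial_mul_factorial]
  push_cast
  ring

theorem centralBinom_isEquivalent :
    (fun n : ℕ => (centralBinom n : ℝ)) ~[atTop] fun n => 4 ^ n / √(π * n) := by
  have hfac := Stirling.factorial_isEquivalent_stirling
  have h := (hfac.comp_tendsto (tendsto_id.const_mul_atTop' two_pos)).div (hfac.pow 2)
  refine (h.congr_left ?_).congr_right ?_
  · filter_upwards with n
    simp [cast_factorial_two_mul, field]
  · filter_upwards [eventually_ne_atTop 0] with n hn
    have hn' : (0 : ℝ) < n := by positivity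
    have hsqrt : √(2 * (2 * n : ℕ) * π) = 2 * √(π * n) := by
      rw [show (2 * (2 * n : ℕ) * π : ℝ) = 2 ^ 2 * (π * n) by push_cast; ring,
        sqrt_mul (by positivity), sqrt_sq (by positivity)]
    have hpow : ((2 * n : ℕ) / exp 1 : ℝ) ^ (2 * n) = 4 ^ n * ((n / exp 1) ^ n) ^ 2 := by
      rw [pow_mul, pow_right_comm _ n 2, ← mul_pow]
      push_cast
      ring
    have hπn : (2 * n * π : ℝ) = 2 * √(π * n) ^ 2 := by
      rw [sq_sqrt (by positivity)]
      ring
    simp only [Function.comp_apply, Pi.div_apply, Pi.pow_apply, id]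
    rw [hsqrt, hpow, mul_pow, sq_sqrt (by positivity), hπn]
    field_simp

theorem wigner3jSqEqual_eq_centralBinom (k : ℕ) :
    wigner3jSqEqual k = (centralBinom k : ℝ) ^ 3 / ((6 * k + 1) * centralBinom (3 * k)) := by
  rw [wigner3jSqEqual, factorial_succ, show 6 * k = 2 * (3 * k) by ring]
  push_cast
  rw [cast_factorial_two_mul, cast_factorial_two_mul]
  field_simp
  ring

theorem tendsto_sq_mul_centralBinom_approx :
    Tendsto (fun k : ℕ => (2 * k : ℝ) ^ 2 / (6 * k + 1) * (4 ^ k / √(π * k)) ^ 3 /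
      (4 ^ (3 * k) / √(π * (3 * k : ℕ)))) atTop (nhds (2 / (π * √3))) := by
  have hlim : Tendsto (fun k : ℕ => 2 / (π * √3) * (k / (k + 1 / 6))) atTop
      (nhds (2 / (π * √3))) := by
    simpa using (tendsto_natCast_div_add_atTop (1 / 6 : ℝ)).const_mul (2 / (π * √3))
  refine hlim.congr' ?_
  filter_upwards [eventually_ne_atTop 0] with k hk
  have hk' : (0 : ℝ) < k := by positivity
  have hsqrt : √(π * (3 * k : ℕ)) = √3 * √(π * k) := by
    rw [← sqrt_mul (by norm_num)]
    push_cast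
    ring_nf
  rw [hsqrt]
  field_simp
  rw [sq_sqrt (by positivity), sq_sqrt (by positivity)]
  ring

/-- `lim_{l→∞, l even} l² W(l)² = 2/(π√3)`. -/
theorem wigner_equal_limit :
    Tendsto (fun k : ℕ => ((2 * k : ℕ) : ℝ) ^ 2 * wigner3jSqEqual k) atTop
      (nhds (2 / (Real.pi * Real.sqrt 3))) := by
  have hC := centralBinom_isEquivalent
  have hequiv : (fun k : ℕ => ((2 * k : ℕ) : ℝ) ^ 2 * wigner3jSqEqual k) ~[atTop]
      fun k => (2 * k : ℝ) ^ 2 / (6 * k + 1) * (4 ^ k / √(π * k)) ^ 3 /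
        (4 ^ (3 * k) / √(π * (3 * k : ℕ))) := by
    refine ((IsEquivalent.refl.mul (hC.pow 3)).div
      (hC.comp_tendsto (tendsto_id.const_mul_atTop' three_pos))).congr_left ?_
    filter_upwards with k
    simp [wigner3jSqEqual_eq_centralBinom, field]
  exact hequiv.symm.tendsto_nhds tendsto_sq_mul_centralBinom_approx
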